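/- Let c > 1 and set ρ = 1/(2c^2 - 1). Then the function g(τ) = ρ + ((c^2-1)/(2c^2-1))·τ + (c^2(c^2-1)/(2c^2-1))·(2 - τ - 2√(1-τ)) satisfies g(τ) ≤ ρ + (1 - c^4ρ^2)τ for all τ ∈ [0, min(1, (2c^2-1)/c^4)]. -/
import Mathlib


theorem tradeoff_exponent_bound
    (c : ℝ) (hc : 1 < c) (ρ τ : ℝ) (hρ : ρ = 1 / (2 * c ^ 2 - 1))
    (hτ0 : 0 ≤ τ) (hτ : τ ≤ min 1 ((2 * c ^ 2 - 1) / c ^ 4)) :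
    ρ + ((c ^ 2 - 1) / (2 * c ^ 2 - 1)) * τ +
        (c ^ 2 * (c ^ 2 - 1) / (2 * c ^ 2 - 1)) * (2 - τ - 2 * Real.sqrt (1 - τ))
      ≤ ρ + (1 - c ^ 4 * ρ ^ 2) * τ := by
  have hc2 : 1 < c ^ 2 := by nlinarith
  have hd : 0 < 2 * c ^ 2 - 1 := by nlinarith
  have hc4 : 0 < c ^ 4 := by positivity
  have hτ1 : τ ≤ 1 := le_trans hτ (min_le_left _ _)
  have hτ2 : τ ≤ (2 * c ^ 2 - 1) / c ^ 4 := le_trans hτ (min_le_right _ _)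
  set s := Real.sqrt (1 - τ) with hs
  have hs0 : 0 ≤ s := Real.sqrt_nonneg _
  have hs2 : s ^ 2 = 1 - τ := Real.sq_sqrt (by linarith)
  -- s ≥ (c^2-1)/c^2
  have hkey : (c ^ 2 - 1) / c ^ 2 ≤ s := by
    have h1 : ((c ^ 2 - 1) / c ^ 2) ^ 2 ≤ 1 - τ := by
      rw [div_pow]
      rw [div_le_iff₀ (by positivity)]
      have h6 : τ * c ^ 4 ≤ 2 * c ^ 2 - 1 := (le_div_iff₀ hc4).mp hτ2
      nlinarith [h6]
    calc (c ^ 2 - 1) / c ^ 2 = Real.sqrt (((c ^ 2 - 1) / c ^ 2) ^ 2) := by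
          rw [Real.sqrt_sq (div_nonneg (by nlinarith) (by positivity))]
      _ ≤ s := Real.sqrt_le_sqrt h1
  -- reduce to polynomial inequality
  have hρ' : ρ * (2 * c ^ 2 - 1) = 1 := by
    rw [hρ]; field_simp
  have hρ0 : 0 < ρ := by rw [hρ]; positivity
  -- key: ρ * τ ≥ (1 - s)^2
  have hmain : (1 - s) ^ 2 ≤ ρ * τ := by
    have h1s : 0 < 1 + s := by linarith
    have hts : τ = (1 - s) * (1 + s) := by nlinarith [hs2]
    have h2 : (2 * c ^ 2 - 1) / c ^ 2 ≤ 1 + s := by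
      have : (2 * c ^ 2 - 1) / c ^ 2 = 1 + (c ^ 2 - 1) / c ^ 2 := by
        field_simp; ring
      linarith [hkey, this.le]
    -- τ ≤ ρ (1+s)^2
    have h3 : τ ≤ ρ * (1 + s) ^ 2 := by
      have h4 : (2 * c ^ 2 - 1) / c ^ 4 ≤ ρ * (1 + s) ^ 2 := by
        rw [div_le_iff₀ hc4]
        have h5 : ((2 * c ^ 2 - 1) / c ^ 2) ^ 2 ≤ (1 + s) ^ 2 := by
          apply pow_le_pow_left₀ (by positivity) h2
        rw [div_pow, div_le_iff₀ (by positivity : (0:ℝ) < (c^2)^2)] at h5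
        nlinarith [h5, hρ0, hρ', mul_pos hρ0 hd]
      linarith [hτ2, h4]
    have h1s0 : 1 - s ≥ 0 := by
      nlinarith [hs2, hs0, hτ0]
    nlinarith [h3, hts, mul_pos h1s h1s, h1s0]
  -- now conclude
  have hexp : 2 - τ - 2 * s = (1 - s) ^ 2 := by nlinarith [hs2]
  rw [hexp]
  have hc21 : 0 < c ^ 2 * (c ^ 2 - 1) := by nlinarith
  have hfrac : c ^ 2 * (c ^ 2 - 1) / (2 * c ^ 2 - 1) = c ^ 2 * (c ^ 2 - 1) * ρ := by
    rw [hρ]; ring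
  rw [hfrac]
  have hmain' : c ^ 2 * (c ^ 2 - 1) * ρ * ((1 - s) ^ 2) ≤ c ^ 2 * (c ^ 2 - 1) * ρ * (ρ * τ) :=
    mul_le_mul_of_nonneg_left hmain (le_of_lt (mul_pos hc21 hρ0))
  have hfrac2 : (c ^ 2 - 1) / (2 * c ^ 2 - 1) = (c ^ 2 - 1) * ρ := by rw [hρ]; ring
  have hcoef2 : (c ^ 2 - 1) * ρ + c ^ 2 * (c ^ 2 - 1) * ρ ^ 2 =
      1 - c ^ 4 * ρ ^ 2 := by
    linear_combination (c ^ 2 * ρ + 1) * hρ'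
  rw [hfrac2]
  have hdist := mul_le_mul_of_nonneg_right hcoef2.le hτ0
  linarith [hmain', hdist]
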